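/- arXiv:2308.02672 — 4 statements merged into one kernel-verified Lean document; each statement's English description precedes it below -/
import Mathlib

section
/- If (X, μ) is a measure space equipped with a ball-basis ℬ and μ(X) < ∞, then X itself belongs to ℬ. -/
open MeasureTheory Set ENNReal NNReal

/-- A ball-basis on a measure space `(X, μ)`: a family of measurable sets of positive
finite measure satisfying conditions B1)-B4) of Karagulyan. -/
structure BallBasis (X : Type*) [MeasurableSpace X] (μ : Measure X) where
  balls : Set (Set X)
  K : ℝ≥0
  K_pos : 0 < K
  measurableSet : ∀ B ∈ balls, MeasurableSet B
  measure_pos : ∀ B ∈ balls, 0 < μ B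
  measure_lt_top : ∀ B ∈ balls, μ B < ∞
  exists_ball : ∀ x y : X, ∃ B ∈ balls, x ∈ B ∧ y ∈ B
  approx : ∀ E : Set X, MeasurableSet E → ∀ ε : ℝ≥0∞, 0 < ε →
      ∃ Bs : ℕ → Set X, (∀ k, Bs k ∈ balls) ∧ μ (symmDiff E (⋃ k, Bs k)) < ε
  hull : Set X → Set X
  hull_mem : ∀ B ∈ balls, hull B ∈ balls
  star_subset_hull : ∀ B ∈ balls,
      (⋃₀ {A | A ∈ balls ∧ μ A ≤ 2 * μ B ∧ (A ∩ B).Nonempty}) ⊆ hull B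
  measure_hull_le : ∀ B ∈ balls, μ (hull B) ≤ (K : ℝ≥0∞) * μ B

namespace BallBasis

variable {X : Type*} [MeasurableSpace X] {μ : Measure X}

/-- `B* = ⋃ {A ∈ ℬ : μ A ≤ 2 μ B, A ∩ B ≠ ∅}`. -/
def star (ℬ : BallBasis X μ) (B : Set X) : Set X :=
  ⋃₀ {A | A ∈ ℬ.balls ∧ μ A ≤ 2 * μ B ∧ (A ∩ B).Nonempty}

/-- The doubling condition for a ball-basis, with doubling constant `η`. -/
def Doubling (ℬ : BallBasis X μ) (η : ℝ≥0) : Prop :=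
  ∀ B ∈ ℬ.balls, ℬ.star B ≠ univ →
    ∃ B' ∈ ℬ.balls, B ⊂ B' ∧ μ B' ≤ (η : ℝ≥0∞) * μ B

end BallBasis

/-- If `(X, μ)` has a ball-basis `ℬ` and `μ(X) < ∞`, then `X ∈ ℬ`. -/
theorem univ_mem_ballBasis_of_finite_measure {X : Type*} [MeasurableSpace X] [Nonempty X]
    {μ : Measure X} (ℬ : BallBasis X μ) (h : μ univ < ∞) :
    univ ∈ ℬ.balls := by
  -- the supremum of measures of balls
  set s : ℝ≥0∞ := ⨆ B ∈ ℬ.balls, μ B with hs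
  -- there is at least one ball
  obtain ⟨x⟩ := (inferInstance : Nonempty X)
  obtain ⟨B₀, hB₀, -, -⟩ := ℬ.exists_ball x x
  have hs_pos : 0 < s := lt_of_lt_of_le (ℬ.measure_pos B₀ hB₀)
    (le_biSup _ hB₀)
  have hs_lt_top : s < ∞ := by
    apply lt_of_le_of_lt _ h
    exact iSup₂_le fun B _ => measure_mono (subset_univ B)
  -- pick a ball with measure > s/2
  have hhalf : s / 2 < s := ENNReal.half_lt_self hs_pos.ne' hs_lt_top.ne
  rw [hs, lt_iSup_iff] at hhalf
  obtain ⟨B, hB⟩ := hhalf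
  rw [lt_iSup_iff] at hB
  obtain ⟨hBmem, hB⟩ := hB
  have h2 : s ≤ 2 * μ B := by
    rw [ENNReal.div_lt_iff (Or.inl two_ne_zero) (Or.inl ENNReal.ofNat_ne_top)] at hB
    rw [mul_comm] at hB
    exact hB.le
  -- B is nonempty
  have hBne : B.Nonempty := nonempty_of_measure_ne_zero (ℬ.measure_pos B hBmem).ne'
  obtain ⟨b, hb⟩ := hBne
  -- star B = univ
  have hstar : (univ : Set X) ⊆ ℬ.hull B := by
    intro y _
    apply ℬ.star_subset_hull B hBmem
    obtain ⟨A, hA, hyA, hbA⟩ := ℬ.exists_ball y b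
    refine ⟨A, ⟨hA, le_trans (le_biSup _ hA) h2, ⟨b, hbA, hb⟩⟩, hyA⟩
  have : ℬ.hull B = univ := eq_univ_of_univ_subset hstar
  rw [← this]
  exact ℬ.hull_mem B hBmem
end

section
/- Let (X, μ) be a measure space equipped with a ball-basis ℬ. Then there exists an increasing sequence of balls G₁ ⊂ G₂ ⊂ … ⊂ Gₙ ⊂ … with X = ∪ₖ Gₖ, and moreover for every ball B ∈ ℬ there exists some n with B ⊂ Gₙ. -/
open MeasureTheory Set ENNReal NNReal

/-!
Start from any ball and let each next ball contain the star of the previous one; if some ball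
meeting the current ball `B` is more than twice as large as `B`, take the next ball to be the hull
of the hull of that large ball, so that it is more than twice as large as `B` as well. A ball `C`
meeting the chain but never absorbed by it escapes the stars of all later balls, which forces these
to be smaller than `μ C / 2` and, at the same time, to double at every step: impossible, since
`μ C < ∞`. Any two points lie in a common ball, so every ball meets a ball that meets the chain,
and is absorbed as well.
-/

theorem ENNReal.exists_lt_of_two_mul_le_succ {a : ℕ → ℝ≥0∞} (h0 : a 0 ≠ 0)
    (ha : ∀ n, 2 * a n ≤ a (n + 1)) {c : ℝ≥0∞} (hc : c ≠ ∞) : ∃ n, c < a n := by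
  have hpow : ∀ n, 2 ^ n * a 0 ≤ a n := by
    intro n
    induction n with
    | zero => simp
    | succ n ih =>
      calc 2 ^ (n + 1) * a 0 = 2 * (2 ^ n * a 0) := by ring
        _ ≤ 2 * a n := by gcongr
        _ ≤ a (n + 1) := ha n
  have htop : Filter.Tendsto (fun n ↦ (2 : ℝ≥0∞) ^ n * a 0) Filter.atTop (nhds ∞) := by
    simpa only [top_mul h0] using
      ENNReal.Tendsto.mul_const (b := a 0)
        (ENNReal.tendsto_pow_atTop_nhds_top_iff.mpr one_lt_two) (Or.inl ENNReal.top_ne_zero)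
  obtain ⟨n, hn⟩ := (htop.eventually (lt_mem_nhds hc.lt_top)).exists
  exact ⟨n, hn.trans_le (hpow n)⟩

namespace BallBasis

variable {X : Type*} [MeasurableSpace X] {μ : Measure X} (ℬ : BallBasis X μ)

theorem nonempty_of_mem {B : Set X} (hB : B ∈ ℬ.balls) : B.Nonempty :=
  nonempty_of_measure_ne_zero (ℬ.measure_pos B hB).ne'

theorem subset_star_of_mem {A B : Set X} (hA : A ∈ ℬ.balls) (hAB : μ A ≤ 2 * μ B)
    (hne : (A ∩ B).Nonempty) : A ⊆ ℬ.star B :=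
  subset_sUnion_of_mem ⟨hA, hAB, hne⟩

theorem subset_star {B : Set X} (hB : B ∈ ℬ.balls) : B ⊆ ℬ.star B :=
  ℬ.subset_star_of_mem hB (le_mul_of_one_le_left' one_le_two)
    (by simpa using ℬ.nonempty_of_mem hB)

theorem star_subset_star {B C : Set X} (hBC : B ⊆ C) (hμ : μ B ≤ μ C) :
    ℬ.star B ⊆ ℬ.star C :=
  sUnion_subset_sUnion fun _ ⟨hA, hAB, hne⟩ ↦
    ⟨hA, hAB.trans (by gcongr), hne.mono (inter_subset_inter_right _ hBC)⟩

theorem subset_hull {B : Set X} (hB : B ∈ ℬ.balls) : B ⊆ ℬ.hull B :=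
  (ℬ.subset_star hB).trans (ℬ.star_subset_hull B hB)

def IsStarStep (B B' : Set X) : Prop :=
  ℬ.star B ⊆ B' ∧ ∀ A ∈ ℬ.balls, (A ∩ B).Nonempty → 2 * μ B < μ A → 2 * μ B < μ B'

theorem IsStarStep.subset {ℬ : BallBasis X μ} {B B' : Set X} (h : ℬ.IsStarStep B B')
    (hB : B ∈ ℬ.balls) : B ⊆ B' :=
  (ℬ.subset_star hB).trans h.1

theorem exists_isStarStep {B : Set X} (hB : B ∈ ℬ.balls) :
    ∃ B' ∈ ℬ.balls, ℬ.IsStarStep B B' := by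
  by_cases hlarge : ∃ A ∈ ℬ.balls, (A ∩ B).Nonempty ∧ 2 * μ B < μ A
  · obtain ⟨A, hA, hne, hlt⟩ := hlarge
    have hHA := ℬ.hull_mem A hA
    have hA_le : μ A ≤ μ (ℬ.hull A) := measure_mono (ℬ.subset_hull hA)
    have hB_le : μ B ≤ μ A := (le_mul_of_one_le_left' one_le_two).trans hlt.le
    have hB_star : B ⊆ ℬ.star A :=
      ℬ.subset_star_of_mem hB (hB_le.trans (le_mul_of_one_le_left' one_le_two))
        (by rwa [inter_comm])
    have hB_sub : B ⊆ ℬ.hull A := hB_star.trans (ℬ.star_subset_hull A hA)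
    refine ⟨ℬ.hull (ℬ.hull A), ℬ.hull_mem _ hHA, ?_, fun _ _ _ _ ↦ ?_⟩
    · exact (ℬ.star_subset_star hB_sub (hB_le.trans hA_le)).trans (ℬ.star_subset_hull _ hHA)
    · exact hlt.trans_le (hA_le.trans (measure_mono (ℬ.subset_hull hHA)))
  · push Not at hlarge
    exact ⟨ℬ.hull B, ℬ.hull_mem B hB, ℬ.star_subset_hull B hB,
      fun A hA hne hlt ↦ absurd (hlarge A hA hne) hlt.not_ge⟩

theorem exists_isStarStep_seq [Nonempty X] :
    ∃ G : ℕ → Set X, (∀ n, G n ∈ ℬ.balls) ∧ ∀ n, ℬ.IsStarStep (G n) (G (n + 1)) := by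
  obtain ⟨x⟩ := ‹Nonempty X›
  obtain ⟨B₀, hB₀, -⟩ := ℬ.exists_ball x x
  choose! next hnext_mem hnext using fun B (hB : B ∈ ℬ.balls) ↦ ℬ.exists_isStarStep hB
  have hmem : ∀ n, next^[n] B₀ ∈ ℬ.balls := by
    intro n
    induction n with
    | zero => exact hB₀
    | succ n ih => simpa only [Function.iterate_succ_apply'] using hnext_mem _ ih
  refine ⟨fun n ↦ next^[n] B₀, hmem, fun n ↦ ?_⟩
  simpa only [Function.iterate_succ_apply'] using hnext _ (hmem n)

section StarStepSeq

variable {ℬ} {G : ℕ → Set X} (hG : ∀ n, G n ∈ ℬ.balls)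
  (hstep : ∀ n, ℬ.IsStarStep (G n) (G (n + 1)))
include hG hstep

theorem monotone_of_isStarStep : Monotone G :=
  monotone_nat_of_le_succ fun n ↦ (hstep n).subset (hG n)

theorem exists_subset_of_inter_nonempty {C : Set X} (hC : C ∈ ℬ.balls) {m : ℕ}
    (hm : (C ∩ G m).Nonempty) : ∃ n, C ⊆ G n := by
  by_contra! hout
  have hmeet (k : ℕ) : (C ∩ G (m + k)).Nonempty :=
    hm.mono (inter_subset_inter_right _ (monotone_of_isStarStep hG hstep (m.le_add_right k)))
  have hlarge (k : ℕ) : 2 * μ (G (m + k)) < μ C :=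
    not_le.mp fun hle ↦ hout _ ((ℬ.subset_star_of_mem hC hle (hmeet k)).trans (hstep _).1)
  obtain ⟨k, hk⟩ := ENNReal.exists_lt_of_two_mul_le_succ (a := fun k ↦ μ (G (m + k)))
    (ℬ.measure_pos _ (hG m)).ne' (fun k ↦ ((hstep _).2 C hC (hmeet k) (hlarge k)).le)
    (ℬ.measure_lt_top C hC).ne
  exact (hk.trans_le (le_mul_of_one_le_left' one_le_two)).not_gt (hlarge k)

theorem exists_subset_of_isStarStep {B : Set X} (hB : B ∈ ℬ.balls) : ∃ n, B ⊆ G n := by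
  obtain ⟨x, hx⟩ := ℬ.nonempty_of_mem (hG 0)
  obtain ⟨y, hy⟩ := ℬ.nonempty_of_mem hB
  obtain ⟨C, hC, hyC, hxC⟩ := ℬ.exists_ball y x
  obtain ⟨n, hCn⟩ := exists_subset_of_inter_nonempty hG hstep hC ⟨x, hxC, hx⟩
  exact exists_subset_of_inter_nonempty hG hstep hB ⟨y, hy, hCn hyC⟩

theorem iUnion_eq_univ_of_isStarStep : ⋃ n, G n = univ := by
  refine eq_univ_of_forall fun x ↦ ?_
  obtain ⟨B, hB, hx, -⟩ := ℬ.exists_ball x x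
  obtain ⟨n, hn⟩ := exists_subset_of_isStarStep hG hstep hB
  exact mem_iUnion.mpr ⟨n, hn hx⟩

end StarStepSeq

end BallBasis

/-- There exists an increasing sequence of balls exhausting `X`, which eventually
absorbs every ball. -/
theorem exists_increasing_exhaustion_of_ballBasis {X : Type*} [MeasurableSpace X] [Nonempty X]
    {μ : Measure X} (ℬ : BallBasis X μ) :
    ∃ G : ℕ → Set X, (∀ n, G n ∈ ℬ.balls) ∧ Monotone G ∧ (⋃ n, G n) = univ ∧
      ∀ B ∈ ℬ.balls, ∃ n, B ⊆ G n := by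
  obtain ⟨G, hG, hstep⟩ := ℬ.exists_isStarStep_seq
  exact ⟨G, hG, BallBasis.monotone_of_isStarStep hG hstep,
    BallBasis.iUnion_eq_univ_of_isStarStep hG hstep,
    fun _ hB ↦ BallBasis.exists_subset_of_isStarStep hG hstep hB⟩
end

section
/- Let (X, μ) be a measure space with a ball-basis ℬ. If E ⊂ X is bounded (contained in some ball) and 𝒢 ⊂ ℬ is a family of balls covering E, then there exists a finite or countable sequence of pairwise disjoint balls Gₖ ∈ 𝒢 such that E ⊂ ∪ₖ Gₖ*. -/
open MeasureTheory Set ENNReal NNReal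

/-! Among the balls of `𝒢` meeting `E ⊆ B`, either one has at least half the measure of `B`,
and then `E ⊆ B ⊆ G*`, or all are smaller than `B`. In the second case Vitali's selection with
enlargement factor `2`, applied to `μ`, gives a disjoint subfamily whose stars cover `E`. The
selected balls meet `B` and are smaller, so they lie in `B* ⊆ [B]`, a set of finite measure;
being disjoint and of positive measure, there are only countably many of them. -/

theorem Set.PairwiseDisjoint.countable_of_measure_pos {α : Type*} [MeasurableSpace α]
    {μ : Measure α} {S : Set (Set α)} (hd : S.PairwiseDisjoint id)
    (hmeas : ∀ A ∈ S, MeasurableSet A) (hpos : ∀ A ∈ S, 0 < μ A) (hfin : μ (⋃₀ S) ≠ ∞) :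
    S.Countable := by
  have hcount := Measure.countable_meas_pos_of_disjoint_of_meas_iUnion_ne_top μ
    (As := ((↑) : S → Set α)) (fun A ↦ hmeas A A.2)
    (fun A B hAB ↦ hd A.2 B.2 (Subtype.coe_ne_coe.2 hAB)) (by rwa [← sUnion_eq_iUnion])
  rw [← countable_coe_iff, ← countable_univ_iff]
  simpa only [fun A : S ↦ hpos A A.2, ofPred_true] using hcount

namespace BallBasis

variable {X : Type*} [MeasurableSpace X] {μ : Measure X} (ℬ : BallBasis X μ)

theorem subset_star_s2 {A B : Set X} (hA : A ∈ ℬ.balls) (hAB : (A ∩ B).Nonempty)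
    (hμ : μ A ≤ 2 * μ B) : A ⊆ ℬ.star B :=
  subset_sUnion_of_mem ⟨hA, hμ, hAB⟩

theorem measure_star_lt_top {B : Set X} (hB : B ∈ ℬ.balls) : μ (ℬ.star B) < ∞ :=
  (measure_mono (ℬ.star_subset_hull B hB)).trans_lt <| (ℬ.measure_hull_le B hB).trans_lt <|
    ENNReal.mul_lt_top coe_lt_top (ℬ.measure_lt_top B hB)

theorem countable_of_pairwiseDisjoint_of_subset_star {𝒢 : Set (Set X)} (h𝒢 : 𝒢 ⊆ ℬ.balls)
    (hd : 𝒢.PairwiseDisjoint id) {B : Set X} (hB : B ∈ ℬ.balls) (hsub : ∀ G ∈ 𝒢, G ⊆ ℬ.star B) :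
    𝒢.Countable :=
  hd.countable_of_measure_pos (fun G hG ↦ ℬ.measurableSet G (h𝒢 hG))
    (fun G hG ↦ ℬ.measure_pos G (h𝒢 hG))
    (measure_ne_top_of_subset (sUnion_subset hsub) (ℬ.measure_star_lt_top hB).ne)

theorem exists_pairwiseDisjoint_subfamily_subset_star {𝒢 : Set (Set X)} (h𝒢 : 𝒢 ⊆ ℬ.balls)
    {R : ℝ≥0∞} (hR : R ≠ ∞) (hle : ∀ G ∈ 𝒢, μ G ≤ R) :
    ∃ 𝒢' ⊆ 𝒢, 𝒢'.PairwiseDisjoint id ∧ ∀ G ∈ 𝒢, ∃ G' ∈ 𝒢', G ⊆ ℬ.star G' := by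
  have hfin : ∀ G ∈ 𝒢, μ G ≠ ∞ := fun G hG ↦ ne_top_of_le_ne_top hR (hle G hG)
  obtain ⟨𝒢', h𝒢', hd, hcov⟩ := Vitali.exists_disjoint_subfamily_covering_enlargement id 𝒢
    (fun G ↦ (μ G).toReal) 2 one_lt_two (fun _ _ ↦ toReal_nonneg) R.toReal
    (fun G hG ↦ toReal_mono hR (hle G hG))
    (fun G hG ↦ nonempty_of_measure_ne_zero (ℬ.measure_pos G (h𝒢 hG)).ne')
  refine ⟨𝒢', h𝒢', hd, fun G hG ↦ ?_⟩
  obtain ⟨G', hG', hmeet, hμ⟩ := hcov G hG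
  refine ⟨G', hG', ℬ.subset_star_s2 (h𝒢 hG) hmeet ?_⟩
  rwa [← ENNReal.toReal_le_toReal (hfin G hG) (mul_ne_top ofNat_ne_top (hfin G' (h𝒢' hG'))),
    toReal_mul, toReal_ofNat]

end BallBasis

/-- Vitali-type covering lemma: a bounded set covered by a family of balls is covered by
the `star`s of a countable pairwise disjoint subfamily. -/
theorem exists_disjoint_subfamily_covering_star {X : Type*} [MeasurableSpace X]
    {μ : Measure X} (ℬ : BallBasis X μ) {E : Set X} (hE : ∃ B ∈ ℬ.balls, E ⊆ B)
    {𝒢 : Set (Set X)} (h𝒢 : 𝒢 ⊆ ℬ.balls) (hcov : E ⊆ ⋃₀ 𝒢) :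
    ∃ 𝒢' ⊆ 𝒢, 𝒢'.Countable ∧ 𝒢'.PairwiseDisjoint id ∧ E ⊆ ⋃ G ∈ 𝒢', ℬ.star G := by
  obtain ⟨B, hB, hEB⟩ := hE
  set 𝒯 := {G ∈ 𝒢 | (G ∩ E).Nonempty}
  have h𝒯 : 𝒯 ⊆ ℬ.balls := fun G hG ↦ h𝒢 hG.1
  have hmeet : ∀ G ∈ 𝒯, (G ∩ B).Nonempty := fun G hG ↦ hG.2.mono (inter_subset_inter_right G hEB)
  by_cases hbig : ∃ G ∈ 𝒯, μ B ≤ 2 * μ G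
  · obtain ⟨G, hG, hμ⟩ := hbig
    refine ⟨{G}, singleton_subset_iff.2 hG.1, countable_singleton G,
      pairwiseDisjoint_singleton G id, ?_⟩
    rw [biUnion_singleton]
    exact hEB.trans (ℬ.subset_star_s2 hB (by rw [inter_comm]; exact hmeet G hG) hμ)
  push Not at hbig
  have hle_two_mul (a : ℝ≥0∞) : a ≤ 2 * a := le_mul_of_one_le_left zero_le one_le_two
  have hsmall : ∀ G ∈ 𝒯, μ G ≤ μ B := fun G hG ↦ (hle_two_mul _).trans (hbig G hG).le
  obtain ⟨𝒢', h𝒢'𝒯, hd, hstar⟩ :=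
    ℬ.exists_pairwiseDisjoint_subfamily_subset_star h𝒯 (ℬ.measure_lt_top B hB).ne hsmall
  have hsub : ∀ G ∈ 𝒢', G ⊆ ℬ.star B := fun G hG ↦ ℬ.subset_star_s2 (h𝒯 (h𝒢'𝒯 hG))
    (hmeet G (h𝒢'𝒯 hG)) ((hsmall G (h𝒢'𝒯 hG)).trans (hle_two_mul _))
  refine ⟨𝒢', h𝒢'𝒯.trans (sep_subset 𝒢 _),
    ℬ.countable_of_pairwiseDisjoint_of_subset_star (h𝒢'𝒯.trans h𝒯) hd hB hsub, hd, ?_⟩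
  intro x hx
  obtain ⟨G, hG, hxG⟩ := hcov hx
  obtain ⟨G', hG', hGG'⟩ := hstar G ⟨hG, x, hxG, hx⟩
  exact mem_biUnion hG' (hGG' hxG)
end

section
/- For any ball B ∈ ℬ and function f ∈ L^r(X, 𝕌) one has ⟨f⟩*_{#,B} ≤ inf_{x ∈ B} 𝓜_# f(x) ≤ C ⟨f⟩*_{#,B} for an admissible constant C, where 𝓜_# f(x) = sup_{B ∋ x} ⟨f⟩_{#,B} is the sharp maximal function. -/
open MeasureTheory Set ENNReal NNReal

section Sharp

variable {X : Type*} [MeasurableSpace X] {μ : Measure X}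
variable {𝕌 : Type*} [NormedAddCommGroup 𝕌] [NormedSpace ℝ 𝕌]

/-- The average `f_A = μ(A)⁻¹ ∫_A f`. -/
noncomputable def ballAvg (μ : Measure X) (A : Set X) (f : X → 𝕌) : 𝕌 :=
  (μ A).toReal⁻¹ • ∫ x in A, f x ∂μ

/-- The `L^r` mean oscillation `⟨f⟩_{#,B} = (μ(B)⁻¹ ∫_B ‖f - f_B‖^r)^{1/r}`. -/
noncomputable def sharpAvg (μ : Measure X) (r : ℝ) (f : X → 𝕌) (B : Set X) : ℝ≥0∞ :=
  ((∫⁻ x in B, (‖f x - ballAvg μ B f‖₊ : ℝ≥0∞) ^ r ∂μ) / μ B) ^ (1 / r)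

/-- `⟨f⟩*_{#,B} = sup_{A ∈ ℬ, A ⊇ B} ⟨f⟩_{#,A}`. -/
noncomputable def sharpStar {μ : Measure X} (ℬ : BallBasis X μ) (r : ℝ)
    (f : X → 𝕌) (B : Set X) : ℝ≥0∞ :=
  ⨆ A ∈ {A | A ∈ ℬ.balls ∧ B ⊆ A}, sharpAvg μ r f A

/-- The sharp maximal function `𝓜_# f(x) = sup_{B ∋ x} ⟨f⟩_{#,B}`. -/
noncomputable def sharpMax {μ : Measure X} (ℬ : BallBasis X μ) (r : ℝ)
    (f : X → 𝕌) (x : X) : ℝ≥0∞ :=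
  ⨆ B ∈ {B | B ∈ ℬ.balls ∧ x ∈ B}, sharpAvg μ r f B

end Sharp

/-!
The lower bound holds because every ball containing `B` contains each point of `B`. For the upper
bound let `H` be the hull of `B` and `g = ‖f - f_H‖^r`, so `∫_H g ≤ (⟨f⟩*_{#,B})^r 𝒦 μ(B)`.
Covering `B` by balls on which the average of `g` exceeds `2𝒦 μ(B)⁻¹ ∫_H g` and applying Vitali
to them yields a contradiction, so some `x ∈ B` sees only balls `A ∋ x` of measure `≤ 2μ(B)` with
controlled average of `g`; as the oscillation on `A` is at most `2^r` times the deviation from any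
constant, this bounds `⟨f⟩_{#,A}`. A larger ball `A ∋ x` has a hull containing `B` and of measure
at most `𝒦 μ(A)`, so its oscillation is controlled by `⟨f⟩*_{#,B}` directly.
-/

section Oscillation

variable {X : Type*} [MeasurableSpace X] {μ : Measure X} {r : ℝ} {A : Set X}

theorem setLIntegral_enorm_le_rpow_mul_measure_rpow {ε : Type*} [TopologicalSpace ε]
    [ContinuousENorm ε] (hr : 1 ≤ r) {h : X → ε}
    (hh : AEStronglyMeasurable h (μ.restrict A)) :
    ∫⁻ x in A, ‖h x‖ₑ ∂μ ≤ (∫⁻ x in A, ‖h x‖ₑ ^ r ∂μ) ^ (1 / r) * μ A ^ (1 - 1 / r) := by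
  have hr0 : 0 < r := zero_lt_one.trans_le hr
  have := eLpNorm_le_eLpNorm_mul_rpow_measure_univ (ENNReal.one_le_ofReal.2 hr) hh
  rwa [eLpNorm_one_eq_lintegral_enorm,
    eLpNorm_eq_lintegral_rpow_enorm_toReal (by simpa using hr0) ofReal_ne_top,
    toReal_ofReal hr0.le, Measure.restrict_apply_univ, toReal_one, div_one] at this

variable {𝕌 : Type*} [NormedAddCommGroup 𝕌] [NormedSpace ℝ 𝕌] {f : X → 𝕌}

theorem sharpAvg_le_iff (hr : 0 < r) (h0 : μ A ≠ 0) (hA : μ A ≠ ∞) {t : ℝ≥0∞} :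
    sharpAvg μ r f A ≤ t ↔ ∫⁻ x in A, ‖f x - ballAvg μ A f‖ₑ ^ r ∂μ ≤ t ^ r * μ A := by
  rw [sharpAvg, one_div, ENNReal.rpow_inv_le_iff hr, ENNReal.div_le_iff h0 hA]
  exact Iff.rfl

variable [CompleteSpace 𝕌]

theorem enorm_ballAvg_sub_rpow_le (hr : 1 ≤ r) (h0 : μ A ≠ 0) (hA : μ A ≠ ∞)
    (hf : IntegrableOn f A μ) (c : 𝕌) :
    ‖ballAvg μ A f - c‖ₑ ^ r ≤ (∫⁻ x in A, ‖f x - c‖ₑ ^ r ∂μ) / μ A := by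
  have hr0 : 0 < r := zero_lt_one.trans_le hr
  have hfc : IntegrableOn (fun x => f x - c) A μ := hf.sub (integrableOn_const hA)
  have havg : ballAvg μ A f - c = (μ A).toReal⁻¹ • ∫ x in A, (f x - c) ∂μ := by
    rw [integral_sub hf (integrableOn_const hA), setIntegral_const, measureReal_def, smul_sub,
      smul_smul, inv_mul_cancel₀ (toReal_pos h0 hA).ne', one_smul, ballAvg]
  have hnorm : ‖ballAvg μ A f - c‖ₑ ≤ (μ A)⁻¹ * ∫⁻ x in A, ‖f x - c‖ₑ ∂μ := by
    rw [havg, enorm_smul, Real.enorm_eq_ofReal (by positivity),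
      ofReal_inv_of_pos (toReal_pos h0 hA), ofReal_toReal hA]
    gcongr
    exact enorm_integral_le_lintegral_enorm _
  have hHolder := setLIntegral_enorm_le_rpow_mul_measure_rpow (μ := μ) hr hfc.aestronglyMeasurable
  set J := ∫⁻ x in A, ‖f x - c‖ₑ ^ r ∂μ
  rw [← ENNReal.le_rpow_inv_iff hr0, ← one_div]
  calc ‖ballAvg μ A f - c‖ₑ
      ≤ (μ A)⁻¹ * (J ^ (1 / r) * μ A ^ (1 - 1 / r)) := hnorm.trans (by gcongr)
    _ = (J * (μ A)⁻¹) ^ (1 / r) := by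
        rw [ENNReal.mul_rpow_of_nonneg _ _ (by positivity), ENNReal.inv_rpow,
          ← ENNReal.rpow_neg_one, ← ENNReal.rpow_neg, mul_left_comm, ← ENNReal.rpow_add _ _ h0 hA]
        ring_nf
    _ = (J / μ A) ^ (1 / r) := by rw [← div_eq_mul_inv]

theorem setLIntegral_enorm_sub_ballAvg_rpow_le (hr : 1 ≤ r) (h0 : μ A ≠ 0) (hA : μ A ≠ ∞)
    (hf : IntegrableOn f A μ) (c : 𝕌) :
    ∫⁻ x in A, ‖f x - ballAvg μ A f‖ₑ ^ r ∂μ ≤ 2 ^ r * ∫⁻ x in A, ‖f x - c‖ₑ ^ r ∂μ := by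
  have hr0 : 0 < r := zero_lt_one.trans_le hr
  set J := ∫⁻ x in A, ‖f x - c‖ₑ ^ r ∂μ
  have htri (x : X) : ‖f x - ballAvg μ A f‖ₑ ≤ ‖f x - c‖ₑ + ‖ballAvg μ A f - c‖ₑ := by
    simpa using enorm_sub_le (a := f x - c) (b := ballAvg μ A f - c)
  calc ∫⁻ x in A, ‖f x - ballAvg μ A f‖ₑ ^ r ∂μ
      ≤ ∫⁻ x in A, 2 ^ (r - 1) * (‖f x - c‖ₑ ^ r + ‖ballAvg μ A f - c‖ₑ ^ r) ∂μ :=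
        lintegral_mono fun x =>
          (rpow_le_rpow (htri x) hr0.le).trans (rpow_add_le_mul_rpow_add_rpow _ _ hr)
    _ = 2 ^ (r - 1) * (J + ‖ballAvg μ A f - c‖ₑ ^ r * μ A) := by
        rw [lintegral_const_mul' _ _ (by simp), lintegral_add_right _ measurable_const,
          setLIntegral_const]
    _ ≤ 2 ^ (r - 1) * (J + J) := by
        gcongr
        exact mul_le_of_le_div (enorm_ballAvg_sub_rpow_le hr h0 hA hf c)
    _ = 2 ^ r * J := by
        rw [← two_mul, ← mul_assoc]
        conv_rhs => rw [← sub_add_cancel r 1, rpow_add _ _ two_ne_zero ofNat_ne_top, ENNReal.rpow_one]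

end Oscillation

namespace BallBasis

variable {X : Type*} [MeasurableSpace X] {μ : Measure X} (ℬ : BallBasis X μ) {A B : Set X}

theorem subset_hull_s18 (hB : B ∈ ℬ.balls) (hA : A ∈ ℬ.balls) (hAB : μ A ≤ 2 * μ B)
    (hne : (A ∩ B).Nonempty) : A ⊆ ℬ.hull B :=
  fun _ hz => ℬ.star_subset_hull B hB ⟨A, ⟨hA, hAB, hne⟩, hz⟩

theorem self_subset_hull (hB : B ∈ ℬ.balls) : B ⊆ ℬ.hull B :=
  ℬ.subset_hull_s18 hB hB (le_mul_of_one_le_left zero_le one_le_two)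
    (by rw [inter_self]; exact nonempty_of_measure_ne_zero (ℬ.measure_pos B hB).ne')

theorem one_le_K (hB : B ∈ ℬ.balls) : 1 ≤ (ℬ.K : ℝ≥0∞) := by
  refine (ENNReal.mul_le_mul_iff_left (ℬ.measure_pos B hB).ne' (ℬ.measure_lt_top B hB).ne).1 ?_
  rw [one_mul]
  exact (measure_mono (ℬ.self_subset_hull hB)).trans (ℬ.measure_hull_le B hB)

theorem countable_of_pairwiseDisjoint {u : Set (Set X)} (hu : u ⊆ ℬ.balls)
    (hdisj : u.PairwiseDisjoint id) (hfin : μ (⋃₀ u) ≠ ∞) : u.Countable := by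
  have := Measure.countable_meas_pos_of_disjoint_of_meas_iUnion_ne_top μ
    (As := fun b : u => (b : Set X)) (fun b => ℬ.measurableSet b (hu b.2))
    (fun b b' hbb' => hdisj b.2 b'.2 (Subtype.coe_ne_coe.2 hbb')) (by rwa [← sUnion_eq_iUnion])
  rw [show {b : u | 0 < μ b} = univ from eq_univ_of_forall fun b => ℬ.measure_pos b (hu b.2),
    countable_univ_iff] at this
  exact countable_coe_iff.1 this

theorem exists_countable_pairwiseDisjoint_measure_sUnion_le {t : Set (Set X)} (ht : t ⊆ ℬ.balls)
    {S : Set X} (htS : ∀ A ∈ t, A ⊆ S) (hS : μ S ≠ ∞) :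
    ∃ u ⊆ t, u.Countable ∧ u.PairwiseDisjoint id ∧
      μ (⋃₀ t) ≤ ℬ.K * ∑' b : u, μ b := by
  have hle (A) (hA : A ∈ t) : μ A ≤ μ S := measure_mono (htS A hA)
  obtain ⟨u, hut, hdisj, hcover⟩ := Vitali.exists_disjoint_subfamily_covering_enlargement
    id t (fun A => (μ A).toReal) 2 one_lt_two (fun _ _ => toReal_nonneg) (μ S).toReal
    (fun A hA => toReal_mono hS (hle A hA))
    (fun A hA => nonempty_of_measure_ne_zero (ℬ.measure_pos A (ht hA)).ne')
  have hcount : u.Countable := ℬ.countable_of_pairwiseDisjoint (hut.trans ht) hdisj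
    (ne_top_of_le_ne_top hS (measure_mono (sUnion_subset fun A hA => htS A (hut hA))))
  refine ⟨u, hut, hcount, hdisj, ?_⟩
  have hsub : ⋃₀ t ⊆ ⋃ b ∈ u, ℬ.hull b := by
    rintro z ⟨A, hA, hzA⟩
    obtain ⟨b, hb, hne, hAb⟩ := hcover A hA
    have hμ : μ A ≤ 2 * μ b := by
      rwa [← toReal_le_toReal (ne_top_of_le_ne_top hS (hle A hA))
        (mul_ne_top ofNat_ne_top (ne_top_of_le_ne_top hS (hle b (hut hb)))), toReal_mul]
    exact mem_biUnion hb (ℬ.subset_hull_s18 (ht (hut hb)) (ht hA) hμ hne hzA)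
  calc μ (⋃₀ t) ≤ μ (⋃ b ∈ u, ℬ.hull b) := measure_mono hsub
    _ ≤ ∑' b : u, μ (ℬ.hull b) := measure_biUnion_le μ hcount _
    _ ≤ ∑' b : u, ℬ.K * μ b := ENNReal.tsum_le_tsum fun b => ℬ.measure_hull_le b (ht (hut b.2))
    _ = ℬ.K * ∑' b : u, μ b := ENNReal.tsum_mul_left

theorem exists_mem_forall_setLIntegral_le (hB : B ∈ ℬ.balls) (g : X → ℝ≥0∞)
    (hg : ∫⁻ y in ℬ.hull B, g y ∂μ ≠ ∞) :
    ∃ x ∈ B, ∀ A ∈ ℬ.balls, x ∈ A → μ A ≤ 2 * μ B →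
      ∫⁻ y in A, g y ∂μ ≤ 2 * ℬ.K * (∫⁻ y in ℬ.hull B, g y ∂μ) / μ B * μ A := by
  set I := ∫⁻ y in ℬ.hull B, g y ∂μ
  set c := 2 * ℬ.K * I / μ B
  by_contra! hbad
  set t := {A | A ∈ ℬ.balls ∧ μ A ≤ 2 * μ B ∧ (A ∩ B).Nonempty ∧ c * μ A < ∫⁻ y in A, g y ∂μ}
  have htH (A) (hA : A ∈ t) : A ⊆ ℬ.hull B := ℬ.subset_hull_s18 hB hA.1 hA.2.1 hA.2.2.1
  have hBt : B ⊆ ⋃₀ t := fun z hz => by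
    obtain ⟨A, hA, hzA, hAB, hAc⟩ := hbad z hz
    exact ⟨A, ⟨hA, hAB, ⟨z, hzA, hz⟩, hAc⟩, hzA⟩
  obtain ⟨u, hut, hcount, hdisj, hcover⟩ := ℬ.exists_countable_pairwiseDisjoint_measure_sUnion_le
    (fun A hA => hA.1) htH (ℬ.measure_lt_top _ (ℬ.hull_mem B hB)).ne
  have hsum : c * ∑' b : u, μ b ≤ I :=
    calc c * ∑' b : u, μ b = ∑' b : u, c * μ b := ENNReal.tsum_mul_left.symm
      _ ≤ ∑' b : u, ∫⁻ y in b, g y ∂μ := ENNReal.tsum_le_tsum fun b => (hut b.2).2.2.2.le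
      _ = ∫⁻ y in ⋃ b ∈ u, b, g y ∂μ := (lintegral_biUnion hcount
          (fun b hb => ℬ.measurableSet b (hut hb).1) hdisj g).symm
      _ ≤ I := lintegral_mono_set (iUnion₂_subset fun b hb => htH b (hut hb))
  have hKI : 2 * (ℬ.K * I) ≤ ℬ.K * I :=
    calc 2 * (ℬ.K * I) = c * μ B := by
          rw [ENNReal.div_mul_cancel (ℬ.measure_pos B hB).ne' (ℬ.measure_lt_top B hB).ne, mul_assoc]
      _ ≤ c * (ℬ.K * ∑' b : u, μ b) := by gcongr; exact (measure_mono hBt).trans hcover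
      _ = ℬ.K * (c * ∑' b : u, μ b) := mul_left_comm _ _ _
      _ ≤ ℬ.K * I := by gcongr
  have hI : I = 0 := by
    have hKI0 : ℬ.K * I = 0 := by
      by_contra hne
      exact (ENNReal.lt_add_right (mul_ne_top coe_ne_top hg) hne).not_ge (two_mul (ℬ.K * I) ▸ hKI)
    exact (mul_eq_zero.1 hKI0).resolve_left (by exact_mod_cast ℬ.K_pos.ne')
  obtain ⟨z, hz⟩ := nonempty_of_measure_ne_zero (ℬ.measure_pos B hB).ne'
  obtain ⟨A, hA, hzA, hAB, hAc⟩ := hbad z hz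
  have hAI : ∫⁻ y in A, g y ∂μ ≤ I := lintegral_mono_set (ℬ.subset_hull_s18 hB hA hAB ⟨z, hzA, hz⟩)
  exact (hAc.trans_le (hAI.trans_eq hI)).not_ge zero_le

end BallBasis

section SharpMaximal

variable {X : Type*} [MeasurableSpace X] {μ : Measure X} {ℬ : BallBasis X μ}
  {𝕌 : Type*} [NormedAddCommGroup 𝕌] [NormedSpace ℝ 𝕌] {r : ℝ} {f : X → 𝕌} {A B : Set X}

theorem sharpAvg_le_sharpStar (hA : A ∈ ℬ.balls) (hBA : B ⊆ A) :
    sharpAvg μ r f A ≤ sharpStar ℬ r f B :=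
  le_biSup (fun A => sharpAvg μ r f A) ⟨hA, hBA⟩

theorem sharpStar_le_sharpMax {x : X} (hx : x ∈ B) : sharpStar ℬ r f B ≤ sharpMax ℬ r f x :=
  iSup₂_le fun _ hA => le_biSup (fun A => sharpAvg μ r f A) ⟨hA.1, hA.2 hx⟩

theorem sharpStar_le_iInf_sharpMax : sharpStar ℬ r f B ≤ ⨅ x ∈ B, sharpMax ℬ r f x :=
  le_iInf₂ fun _ => sharpStar_le_sharpMax

theorem setLIntegral_enorm_sub_ballAvg_rpow_le_sharpStar (hr : 0 < r) (hA : A ∈ ℬ.balls)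
    (hBA : B ⊆ A) :
    ∫⁻ x in A, ‖f x - ballAvg μ A f‖ₑ ^ r ∂μ ≤ sharpStar ℬ r f B ^ r * μ A :=
  (sharpAvg_le_iff hr (ℬ.measure_pos A hA).ne' (ℬ.measure_lt_top A hA).ne).1
    (sharpAvg_le_sharpStar hA hBA)

variable [CompleteSpace 𝕌]

theorem setLIntegral_enorm_sub_ballAvg_rpow_le_of_measure_le (hr : 1 ≤ r)
    (hf : ∀ G ∈ ℬ.balls, IntegrableOn f G μ) (hA : A ∈ ℬ.balls) (hB : B ∈ ℬ.balls)
    (hne : (B ∩ A).Nonempty) (hBA : μ B ≤ 2 * μ A) :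
    ∫⁻ x in A, ‖f x - ballAvg μ A f‖ₑ ^ r ∂μ ≤ 2 ^ r * ℬ.K * sharpStar ℬ r f B ^ r * μ A := by
  set D := ℬ.hull A
  have hD := ℬ.hull_mem A hA
  calc ∫⁻ x in A, ‖f x - ballAvg μ A f‖ₑ ^ r ∂μ
      ≤ 2 ^ r * ∫⁻ x in A, ‖f x - ballAvg μ D f‖ₑ ^ r ∂μ :=
        setLIntegral_enorm_sub_ballAvg_rpow_le hr (ℬ.measure_pos A hA).ne'
          (ℬ.measure_lt_top A hA).ne (hf A hA) _
    _ ≤ 2 ^ r * ∫⁻ x in D, ‖f x - ballAvg μ D f‖ₑ ^ r ∂μ := by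
        gcongr
        exact ℬ.self_subset_hull hA
    _ ≤ 2 ^ r * (sharpStar ℬ r f B ^ r * μ D) := by
        gcongr
        exact setLIntegral_enorm_sub_ballAvg_rpow_le_sharpStar (zero_lt_one.trans_le hr) hD
          (ℬ.subset_hull_s18 hA hB hBA hne)
    _ ≤ 2 ^ r * (sharpStar ℬ r f B ^ r * (ℬ.K * μ A)) := by
        gcongr
        exact ℬ.measure_hull_le A hA
    _ = 2 ^ r * ℬ.K * sharpStar ℬ r f B ^ r * μ A := by ring

theorem iInf_sharpMax_le (hr : 1 ≤ r) (hf : ∀ G ∈ ℬ.balls, IntegrableOn f G μ)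
    (hB : B ∈ ℬ.balls) :
    ⨅ x ∈ B, sharpMax ℬ r f x ≤ ((2 : ℝ≥0∞) ^ (r + 1) * ℬ.K ^ 2) ^ (1 / r) * sharpStar ℬ r f B := by
  have hr0 : 0 < r := zero_lt_one.trans_le hr
  set W := sharpStar ℬ r f B
  set H := ℬ.hull B
  rcases eq_or_ne W ∞ with hW | hW
  · have hK := ℬ.K_pos
    rw [hW, mul_top (by positivity)]
    exact le_top
  have hI : ∫⁻ y in H, ‖f y - ballAvg μ H f‖ₑ ^ r ∂μ ≤ W ^ r * (ℬ.K * μ B) :=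
    (setLIntegral_enorm_sub_ballAvg_rpow_le_sharpStar hr0 (ℬ.hull_mem B hB)
      (ℬ.self_subset_hull hB)).trans (by gcongr; exact ℬ.measure_hull_le B hB)
  have hlevel : 2 * ℬ.K * (∫⁻ y in H, ‖f y - ballAvg μ H f‖ₑ ^ r ∂μ) / μ B ≤
      2 * ℬ.K ^ 2 * W ^ r := by
    rw [ENNReal.div_le_iff (ℬ.measure_pos B hB).ne' (ℬ.measure_lt_top B hB).ne]
    calc 2 * ℬ.K * (∫⁻ y in H, ‖f y - ballAvg μ H f‖ₑ ^ r ∂μ)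
        ≤ 2 * ℬ.K * (W ^ r * (ℬ.K * μ B)) := by gcongr
      _ = 2 * ℬ.K ^ 2 * W ^ r * μ B := by ring
  obtain ⟨x, hxB, hx⟩ := ℬ.exists_mem_forall_setLIntegral_le hB (fun y => ‖f y - ballAvg μ H f‖ₑ ^ r)
    (ne_top_of_le_ne_top (mul_ne_top (rpow_ne_top_of_nonneg hr0.le hW)
      (mul_ne_top coe_ne_top (ℬ.measure_lt_top B hB).ne)) hI)
  refine iInf₂_le_of_le x hxB (iSup₂_le fun A ⟨hA, hxA⟩ => ?_)
  have h0 := (ℬ.measure_pos A hA).ne'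
  have hAfin := (ℬ.measure_lt_top A hA).ne
  rw [sharpAvg_le_iff hr0 h0 hAfin, ENNReal.mul_rpow_of_nonneg _ _ hr0.le, ← ENNReal.rpow_mul,
    one_div_mul_cancel hr0.ne', ENNReal.rpow_one, ENNReal.rpow_add _ _ two_ne_zero ofNat_ne_top,
    ENNReal.rpow_one, mul_assoc (2 ^ r)]
  by_cases hAB : μ A ≤ 2 * μ B
  · calc ∫⁻ y in A, ‖f y - ballAvg μ A f‖ₑ ^ r ∂μ
        ≤ 2 ^ r * ∫⁻ y in A, ‖f y - ballAvg μ H f‖ₑ ^ r ∂μ :=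
          setLIntegral_enorm_sub_ballAvg_rpow_le hr h0 hAfin (hf A hA) _
      _ ≤ 2 ^ r * (2 * ℬ.K ^ 2 * W ^ r * μ A) := by
          gcongr
          exact (hx A hA hxA hAB).trans (by gcongr)
      _ = 2 ^ r * (2 * ℬ.K ^ 2) * W ^ r * μ A := by ring
  · have hBA : μ B ≤ 2 * μ A :=
      le_mul_of_one_le_of_le one_le_two ((le_mul_of_one_le_left zero_le one_le_two).trans
        (not_le.1 hAB).le)
    calc ∫⁻ y in A, ‖f y - ballAvg μ A f‖ₑ ^ r ∂μ
        ≤ 2 ^ r * ℬ.K * W ^ r * μ A :=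
          setLIntegral_enorm_sub_ballAvg_rpow_le_of_measure_le hr hf hA hB ⟨x, hxB, hxA⟩ hBA
      _ ≤ 2 ^ r * (2 * ℬ.K ^ 2) * W ^ r * μ A := by
          gcongr
          rw [sq]
          exact (le_mul_of_one_le_left zero_le (ℬ.one_le_K hB)).trans
            (le_mul_of_one_le_left zero_le one_le_two)

end SharpMaximal

/-- For every ball `B`: `⟨f⟩*_{#,B} ≤ inf_{x ∈ B} 𝓜_# f(x) ≤ C ⟨f⟩*_{#,B}`. -/
theorem sharpStar_le_inf_sharpMax {X : Type*} [MeasurableSpace X] {μ : Measure X}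
    (ℬ : BallBasis X μ) {𝕌 : Type*} [NormedAddCommGroup 𝕌] [NormedSpace ℝ 𝕌]
    [CompleteSpace 𝕌] (r : ℝ) (hr : 1 ≤ r) :
    ∃ C : ℝ≥0, 0 < C ∧ ∀ f : X → 𝕌, (∀ G ∈ ℬ.balls, IntegrableOn f G μ) →
      ∀ B ∈ ℬ.balls,
        sharpStar ℬ r f B ≤ (⨅ x ∈ B, sharpMax ℬ r f x) ∧
        (⨅ x ∈ B, sharpMax ℬ r f x) ≤ (C : ℝ≥0∞) * sharpStar ℬ r f B := by
  have hK := ℬ.K_pos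
  refine ⟨(2 ^ (r + 1) * ℬ.K ^ 2) ^ (1 / r), by positivity,
    fun f hf B hB => ⟨sharpStar_le_iInf_sharpMax, ?_⟩⟩
  rw [coe_rpow_of_nonneg _ (by positivity), coe_mul, coe_rpow_of_nonneg _ (by positivity)]
  exact_mod_cast iInf_sharpMax_le hr hf hB
end
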